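/- Let Ω ⊆ ℝ³ be an open set and let a₁, a₂, a₃ : Ω → ℝ be continuously differentiable, with aₗ and all products a_i ∂_i a_ℓ (i,ℓ = 1,2,3) bounded on Ω. Then for every s₀ ∈ ℝ and σ ≥ 0 there exists a constant C ≥ 0 such that for all continuously differentiable u, v : Ω → ℍ with u, v and all their partial derivatives square-integrable on Ω, | b(u,v) | ≤ C · ‖u‖_{H¹} · ‖v‖_{H¹}, where b(u,v) := Σ_{ℓ=1}³ ∫_Ω star(aₗ∂ₗu)·aₗ∂ₗv + (1/2) Σ_{ℓ=1}³ ∫_Ω star(∂ₗu)·∂ₗ(aₗ²)·v + ∫_Ω star(Vu − 2s₀·Tu)·v + σ ∫_Ω star(u)·v and ‖u‖²_{H¹} := ‖u‖²_{L²(Ω)} + Σ_{ℓ=1}³ ‖∂ₗu‖²_{L²(Ω)}. -/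

import Mathlib

open MeasureTheory

noncomputable section

/-- `ℝ³`, modelled as `Fin 3 → ℝ`. -/
abbrev R3 := Fin 3 → ℝ

/-- Partial derivative in the `ℓ`-th coordinate direction of a quaternion-valued function. -/
def pdQ (ℓ : Fin 3) (u : R3 → Quaternion ℝ) (x : R3) : Quaternion ℝ :=
  fderiv ℝ u x (Pi.single ℓ 1)

/-- Partial derivative in the `ℓ`-th coordinate direction of a real-valued function. -/
def pdR (ℓ : Fin 3) (f : R3 → ℝ) (x : R3) : ℝ :=
  fderiv ℝ f x (Pi.single ℓ 1)

/-- The imaginary units `e₁, e₂, e₃` of the quaternions. -/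
def eQ : Fin 3 → Quaternion ℝ
  | 0 => ⟨0, 1, 0, 0⟩
  | 1 => ⟨0, 0, 1, 0⟩
  | 2 => ⟨0, 0, 0, 1⟩

/-- The vector operator `T u = Σₗ eₗ (aₗ ∂ₗ u)`. -/
def Tvec (a : Fin 3 → R3 → ℝ) (u : R3 → Quaternion ℝ) (x : R3) : Quaternion ℝ :=
  ∑ ℓ : Fin 3, eQ ℓ * (a ℓ x • pdQ ℓ u x)

/-- The first-order vector operator
`V u = e₁(a₃(∂₃a₂)∂₂u − a₂(∂₂a₃)∂₃u) + e₂(a₃(∂₃a₁)∂₁u − a₁(∂₁a₃)∂₃u)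
      + e₃(a₁(∂₁a₂)∂₂u − a₂(∂₂a₁)∂₁u)`
(indices shifted by one: `aᵢ = a (i-1)`, `eᵢ = eQ (i-1)`). -/
def Vop (a : Fin 3 → R3 → ℝ) (u : R3 → Quaternion ℝ) (x : R3) : Quaternion ℝ :=
  eQ 0 * ((a 2 x * pdR 2 (a 1) x) • pdQ 1 u x - (a 1 x * pdR 1 (a 2) x) • pdQ 2 u x)
  + eQ 1 * ((a 2 x * pdR 2 (a 0) x) • pdQ 0 u x - (a 0 x * pdR 0 (a 2) x) • pdQ 2 u x)
  + eQ 2 * ((a 0 x * pdR 0 (a 1) x) • pdQ 1 u x - (a 1 x * pdR 1 (a 0) x) • pdQ 0 u x)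

/-- The `L²(Ω)` norm `(∫_Ω |g|²)^{1/2}` of a quaternion-valued function. -/
def nL2 (Ω : Set R3) (g : R3 → Quaternion ℝ) : ℝ :=
  (∫ x in Ω, ‖g x‖ ^ 2) ^ ((1 : ℝ) / 2)

/-- `D₁(u) = Σₗ ‖∂ₗu‖_{L²(Ω)}`. -/
def D1 (Ω : Set R3) (u : R3 → Quaternion ℝ) : ℝ :=
  ∑ ℓ : Fin 3, nL2 Ω (pdQ ℓ u)

/-- The squared Dirichlet seminorm `‖u‖²_D = Σₗ ‖∂ₗu‖²_{L²(Ω)}`. -/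
def nD2 (Ω : Set R3) (u : R3 → Quaternion ℝ) : ℝ :=
  ∑ ℓ : Fin 3, ∫ x in Ω, ‖pdQ ℓ u x‖ ^ 2

/-- `M = Σ_{i,ℓ} ‖aᵢ ∂ᵢ aₗ‖_{L³(Ω)}`. -/
def Msum (Ω : Set R3) (a : Fin 3 → R3 → ℝ) : ℝ :=
  ∑ i : Fin 3, ∑ ℓ : Fin 3, (∫ x in Ω, |a i x * pdR i (a ℓ) x| ^ 3) ^ ((1 : ℝ) / 3)

/-- The real part `Re b_{js₁}(u,u)` of the quadratic form of Definition 3.2 of the paper,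
for a purely imaginary spectral parameter `s = j s₁`:
`ReB(u) = s₁²‖u‖²_{L²} + Σₗ‖aₗ∂ₗu‖²_{L²}
  + Re((1/2) Σₗ ∫_Ω star(∂ₗu) ∂ₗ(aₗ²) u + ∫_Ω star(Vu) u)`. -/
def ReB (Ω : Set R3) (a : Fin 3 → R3 → ℝ) (s₁ : ℝ) (u : R3 → Quaternion ℝ) : ℝ :=
  s₁ ^ 2 * (∫ x in Ω, ‖u x‖ ^ 2)
  + (∑ ℓ : Fin 3, ∫ x in Ω, ‖a ℓ x • pdQ ℓ u x‖ ^ 2)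
  + ((1 / 2 : ℝ) • (∑ ℓ : Fin 3,
        ∫ x in Ω, star (pdQ ℓ u x) * (pdR ℓ (fun y => a ℓ y ^ 2) x • u x))
      + ∫ x in Ω, star (Vop a u x) * u x).re

/-! Every term of the form is an integral of a product whose pointwise norm is at most a
constant times `‖f x‖ ‖g x‖` with `f ∈ {u, ∂ₗu}` and `g ∈ {v, ∂ₗv}`: the coefficients `aₗ`,
`aᵢ∂ᵢaₗ` and `∂ₗ(aₗ²) = 2aₗ∂ₗaₗ` are bounded and the `eₗ` are unit quaternions. Cauchy–Schwarz
in `L²(Ω)` then bounds each term by a constant times `‖u‖_{H¹} ‖v‖_{H¹}`. -/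

lemma norm_eQ (ℓ : Fin 3) : ‖eQ ℓ‖ = 1 := by
  fin_cases ℓ <;>
    rw [← Real.sqrt_sq (norm_nonneg (eQ _)), sq, ← Quaternion.normSq_eq_norm_mul_self,
      Quaternion.normSq_def'] <;>
    simp [eQ]

lemma pdR_sq {f : R3 → ℝ} {x : R3} (hf : DifferentiableAt ℝ f x) (ℓ : Fin 3) :
    pdR ℓ (fun y => f y ^ 2) x = 2 * (f x * pdR ℓ f x) := by
  simp only [pdR, fderiv_fun_pow 2 hf, smul_apply, nsmul_eq_mul, smul_eq_mul]
  ring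

lemma exists_abs_le_of_finite {ι α : Type*} [Finite ι] {s : Set α} {f : ι → α → ℝ}
    (hf : ∀ i, ∃ B : ℝ, ∀ x ∈ s, |f i x| ≤ B) :
    ∃ B ≥ (0 : ℝ), ∀ i, ∀ x ∈ s, |f i x| ≤ B := by
  choose B hB using hf
  obtain ⟨B', hB'⟩ := Finite.exists_le B
  exact ⟨max B' 0, le_max_right _ _,
    fun i x hx => (hB i x hx).trans ((hB' i).trans (le_max_left _ _))⟩

section CauchySchwarz

variable {α E G : Type*} [MeasurableSpace α] {μ : Measure α} [NormedAddCommGroup E]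
  [NormedAddCommGroup G] [NormedSpace ℝ G]

lemma MeasureTheory.MemLp.integrable_norm_mul_norm {f g : α → E} (hf : MemLp f 2 μ)
    (hg : MemLp g 2 μ) : Integrable (fun x => ‖f x‖ * ‖g x‖) μ := by
  rw [← memLp_one_iff_integrable]
  exact hg.norm.smul hf.norm

lemma integral_norm_mul_norm_le {f g : α → E} (hf : MemLp f 2 μ) (hg : MemLp g 2 μ) :
    ∫ x, ‖f x‖ * ‖g x‖ ∂μ ≤
      (∫ x, ‖f x‖ ^ 2 ∂μ) ^ ((1 : ℝ) / 2) * (∫ x, ‖g x‖ ^ 2 ∂μ) ^ ((1 : ℝ) / 2) := by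
  have h2 : ENNReal.ofReal 2 = 2 := ENNReal.ofReal_ofNat 2
  simpa only [Real.rpow_two] using
    integral_mul_norm_le_Lp_mul_Lq (μ := μ) Real.HolderConjugate.two_two (h2 ▸ hf) (h2 ▸ hg)

lemma norm_integral_le_sum_of_norm_le {ι : Type*} [Fintype ι] {F : α → G} {c : ι → ℝ}
    (hc : ∀ i, 0 ≤ c i) {f g : ι → α → E} (hf : ∀ i, MemLp (f i) 2 μ)
    (hg : ∀ i, MemLp (g i) 2 μ) (hF : ∀ᵐ x ∂μ, ‖F x‖ ≤ ∑ i, c i * (‖f i x‖ * ‖g i x‖)) :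
    ‖∫ x, F x ∂μ‖ ≤ ∑ i, c i *
      ((∫ x, ‖f i x‖ ^ 2 ∂μ) ^ ((1 : ℝ) / 2) * (∫ x, ‖g i x‖ ^ 2 ∂μ) ^ ((1 : ℝ) / 2)) := by
  have hint : ∀ i, Integrable (fun x => c i * (‖f i x‖ * ‖g i x‖)) μ :=
    fun i => ((hf i).integrable_norm_mul_norm (hg i)).const_mul (c i)
  calc ‖∫ x, F x ∂μ‖ ≤ ∫ x, ‖F x‖ ∂μ := norm_integral_le_integral_norm F
    _ ≤ ∫ x, ∑ i, c i * (‖f i x‖ * ‖g i x‖) ∂μ :=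
        integral_mono_of_nonneg (.of_forall fun x => norm_nonneg _)
          (integrable_finsetSum _ fun i _ => hint i) hF
    _ = ∑ i, c i * ∫ x, ‖f i x‖ * ‖g i x‖ ∂μ := by
        rw [integral_finsetSum _ fun i _ => hint i]
        simp only [integral_const_mul]
    _ ≤ _ := Finset.sum_le_sum fun i _ =>
        mul_le_mul_of_nonneg_left (integral_norm_mul_norm_le (hf i) (hg i)) (hc i)

lemma norm_integral_le_of_norm_le {F : α → G} {c : ℝ} (hc : 0 ≤ c) {f g : α → E}
    (hf : MemLp f 2 μ) (hg : MemLp g 2 μ) (hF : ∀ᵐ x ∂μ, ‖F x‖ ≤ c * (‖f x‖ * ‖g x‖)) :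
    ‖∫ x, F x ∂μ‖ ≤ c *
      ((∫ x, ‖f x‖ ^ 2 ∂μ) ^ ((1 : ℝ) / 2) * (∫ x, ‖g x‖ ^ 2 ∂μ) ^ ((1 : ℝ) / 2)) := by
  simpa using norm_integral_le_sum_of_norm_le (ι := Unit) (c := fun _ => c) (f := fun _ => f)
    (g := fun _ => g) (fun _ => hc) (fun _ => hf) (fun _ => hg) (by simpa using hF)

end CauchySchwarz

lemma norm_Tvec_le {a : Fin 3 → R3 → ℝ} {u : R3 → Quaternion ℝ} {x : R3} {B : ℝ}
    (hB : ∀ ℓ, |a ℓ x| ≤ B) : ‖Tvec a u x‖ ≤ B * ∑ j, ‖pdQ j u x‖ := by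
  rw [Finset.mul_sum]
  refine (norm_sum_le _ _).trans (Finset.sum_le_sum fun ℓ _ => ?_)
  rw [norm_mul, norm_eQ, one_mul, norm_smul, Real.norm_eq_abs]
  exact mul_le_mul_of_nonneg_right (hB ℓ) (norm_nonneg _)

lemma norm_eQ_mul_sub_le (i : Fin 3) {r r' M : ℝ} (hr : |r| ≤ M) (hr' : |r'| ≤ M)
    (p q : Quaternion ℝ) : ‖eQ i * (r • p - r' • q)‖ ≤ M * (‖p‖ + ‖q‖) := by
  rw [norm_mul, norm_eQ, one_mul, mul_add]
  refine (norm_sub_le _ _).trans (add_le_add ?_ ?_) <;>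
    rw [norm_smul, Real.norm_eq_abs] <;> gcongr

lemma norm_Vop_le {a : Fin 3 → R3 → ℝ} {u : R3 → Quaternion ℝ} {x : R3} {M : ℝ}
    (hM : ∀ i ℓ, |a i x * pdR i (a ℓ) x| ≤ M) : ‖Vop a u x‖ ≤ 2 * M * ∑ j, ‖pdQ j u x‖ := by
  refine norm_add₃_le.trans ?_
  have h₀ := norm_eQ_mul_sub_le 0 (hM 2 1) (hM 1 2) (pdQ 1 u x) (pdQ 2 u x)
  have h₁ := norm_eQ_mul_sub_le 1 (hM 2 0) (hM 0 2) (pdQ 0 u x) (pdQ 2 u x)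
  have h₂ := norm_eQ_mul_sub_le 2 (hM 0 1) (hM 1 0) (pdQ 1 u x) (pdQ 0 u x)
  rw [Fin.sum_univ_three]
  linarith

def nH1 (Ω : Set R3) (u : R3 → Quaternion ℝ) : ℝ :=
  ((∫ x in Ω, ‖u x‖ ^ 2) + nD2 Ω u) ^ ((1 : ℝ) / 2)

section Sobolev

variable {Ω : Set R3} {u v : R3 → Quaternion ℝ}

lemma nD2_nonneg : 0 ≤ nD2 Ω u :=
  Finset.sum_nonneg fun _ _ => integral_nonneg fun _ => by positivity

lemma nL2_le_nH1 : nL2 Ω u ≤ nH1 Ω u :=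
  Real.rpow_le_rpow (integral_nonneg fun _ => by positivity)
    (le_add_of_nonneg_right nD2_nonneg) (by norm_num)

lemma nL2_pdQ_le_nH1 (ℓ : Fin 3) : nL2 Ω (pdQ ℓ u) ≤ nH1 Ω u := by
  refine Real.rpow_le_rpow (integral_nonneg fun _ => by positivity) ?_ (by norm_num)
  have h : ∫ x in Ω, ‖pdQ ℓ u x‖ ^ 2 ≤ nD2 Ω u :=
    Finset.single_le_sum (f := fun ℓ => ∫ x in Ω, ‖pdQ ℓ u x‖ ^ 2)
      (fun _ _ => integral_nonneg fun _ => by positivity) (Finset.mem_univ ℓ)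
  exact h.trans (le_add_of_nonneg_left (integral_nonneg fun _ => by positivity))

lemma nL2_mul_nL2_le {f g : R3 → Quaternion ℝ} (hf : nL2 Ω f ≤ nH1 Ω u)
    (hg : nL2 Ω g ≤ nH1 Ω v) : nL2 Ω f * nL2 Ω g ≤ nH1 Ω u * nH1 Ω v :=
  mul_le_mul hf hg (Real.rpow_nonneg (integral_nonneg fun _ => by positivity) _)
    ((Real.rpow_nonneg (integral_nonneg fun _ => by positivity) _).trans hf)

end Sobolev

section Form

variable {Ω : Set R3} {a : Fin 3 → R3 → ℝ} {u v : R3 → Quaternion ℝ}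

lemma sum_mul_nL2_mul_nL2_le {c : ℝ} (hc : 0 ≤ c) {f g : Fin 3 → R3 → Quaternion ℝ}
    (hf : ∀ ℓ, nL2 Ω (f ℓ) ≤ nH1 Ω u) (hg : ∀ ℓ, nL2 Ω (g ℓ) ≤ nH1 Ω v) :
    ∑ ℓ, c * (nL2 Ω (f ℓ) * nL2 Ω (g ℓ)) ≤ 3 * c * (nH1 Ω u * nH1 Ω v) := by
  calc ∑ ℓ, c * (nL2 Ω (f ℓ) * nL2 Ω (g ℓ)) ≤ ∑ _ℓ : Fin 3, c * (nH1 Ω u * nH1 Ω v) :=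
        Finset.sum_le_sum fun ℓ _ =>
          mul_le_mul_of_nonneg_left (nL2_mul_nL2_le (hf ℓ) (hg ℓ)) hc
    _ = 3 * c * (nH1 Ω u * nH1 Ω v) := by rw [Fin.sum_univ_three]; ring

lemma norm_sum_integral_coeff_pdQ_le (hΩ : MeasurableSet Ω) {B : ℝ}
    (hB : ∀ ℓ, ∀ x ∈ Ω, |a ℓ x| ≤ B)
    (hu : ∀ ℓ, MemLp (pdQ ℓ u) 2 (volume.restrict Ω))
    (hv : ∀ ℓ, MemLp (pdQ ℓ v) 2 (volume.restrict Ω)) :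
    ‖∑ ℓ : Fin 3, ∫ x in Ω, star (a ℓ x • pdQ ℓ u x) * (a ℓ x • pdQ ℓ v x)‖ ≤
      3 * B ^ 2 * (nH1 Ω u * nH1 Ω v) := by
  refine (norm_sum_le _ _).trans (le_trans (Finset.sum_le_sum fun ℓ _ =>
    norm_integral_le_of_norm_le (sq_nonneg B) (hu ℓ) (hv ℓ)
      (ae_restrict_of_forall_mem hΩ fun x hx => ?_))
    (sum_mul_nL2_mul_nL2_le (sq_nonneg B) nL2_pdQ_le_nH1 nL2_pdQ_le_nH1))
  rw [norm_mul, Quaternion.norm_star, norm_smul, norm_smul, Real.norm_eq_abs]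
  have h := hB ℓ x hx
  have hB2 : |a ℓ x| * |a ℓ x| ≤ B ^ 2 := by nlinarith [abs_nonneg (a ℓ x)]
  nlinarith [mul_nonneg (norm_nonneg (pdQ ℓ u x)) (norm_nonneg (pdQ ℓ v x))]

lemma norm_half_sum_integral_pdR_sq_le (hΩ : MeasurableSet Ω) {M : ℝ} (hM0 : 0 ≤ M)
    (ha : ∀ ℓ, ∀ x ∈ Ω, DifferentiableAt ℝ (a ℓ) x)
    (hM : ∀ ℓ, ∀ x ∈ Ω, |a ℓ x * pdR ℓ (a ℓ) x| ≤ M)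
    (hu : ∀ ℓ, MemLp (pdQ ℓ u) 2 (volume.restrict Ω)) (hv : MemLp v 2 (volume.restrict Ω)) :
    ‖(1 / 2 : ℝ) • ∑ ℓ : Fin 3,
        ∫ x in Ω, star (pdQ ℓ u x) * (pdR ℓ (fun y => a ℓ y ^ 2) x • v x)‖ ≤
      3 * M * (nH1 Ω u * nH1 Ω v) := by
  have hsum : ‖∑ ℓ : Fin 3,
      ∫ x in Ω, star (pdQ ℓ u x) * (pdR ℓ (fun y => a ℓ y ^ 2) x • v x)‖ ≤
        3 * (2 * M) * (nH1 Ω u * nH1 Ω v) := by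
    refine (norm_sum_le _ _).trans (le_trans (Finset.sum_le_sum fun ℓ _ =>
      norm_integral_le_of_norm_le (by positivity) (hu ℓ) hv
        (ae_restrict_of_forall_mem hΩ fun x hx => ?_))
      (sum_mul_nL2_mul_nL2_le (g := fun _ => v) (by positivity) nL2_pdQ_le_nH1
        fun _ => nL2_le_nH1))
    rw [norm_mul, Quaternion.norm_star, norm_smul, Real.norm_eq_abs, pdR_sq (ha ℓ x hx),
      abs_mul, abs_two]
    have h := hM ℓ x hx
    nlinarith [mul_nonneg (norm_nonneg (pdQ ℓ u x)) (norm_nonneg (v x))]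
  rw [norm_smul, Real.norm_eq_abs, abs_of_pos (by norm_num : (0 : ℝ) < 1 / 2)]
  linarith

lemma norm_integral_vect_le (hΩ : MeasurableSet Ω) (s₀ : ℝ) {B M : ℝ} (hB0 : 0 ≤ B)
    (hM0 : 0 ≤ M) (hB : ∀ ℓ, ∀ x ∈ Ω, |a ℓ x| ≤ B)
    (hM : ∀ i ℓ, ∀ x ∈ Ω, |a i x * pdR i (a ℓ) x| ≤ M)
    (hu : ∀ ℓ, MemLp (pdQ ℓ u) 2 (volume.restrict Ω)) (hv : MemLp v 2 (volume.restrict Ω)) :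
    ‖∫ x in Ω, star (Vop a u x - (2 * s₀) • Tvec a u x) * v x‖ ≤
      3 * (2 * M + 2 * |s₀| * B) * (nH1 Ω u * nH1 Ω v) := by
  have hK : 0 ≤ 2 * M + 2 * |s₀| * B := by positivity
  refine (norm_integral_le_sum_of_norm_le (fun _ => hK) hu (fun _ => hv)
    (ae_restrict_of_forall_mem hΩ fun x hx => ?_)).trans
    (sum_mul_nL2_mul_nL2_le hK nL2_pdQ_le_nH1 fun _ => nL2_le_nH1)
  have hV := norm_Vop_le (u := u) fun i ℓ => hM i ℓ x hx
  have hT := norm_Tvec_le (u := u) fun ℓ => hB ℓ x hx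
  have hVT : ‖Vop a u x - (2 * s₀) • Tvec a u x‖ ≤
      (2 * M + 2 * |s₀| * B) * ∑ j, ‖pdQ j u x‖ := by
    refine (norm_sub_le _ _).trans ?_
    rw [norm_smul, Real.norm_eq_abs, abs_mul, abs_two]
    nlinarith [abs_nonneg s₀]
  rw [norm_mul, Quaternion.norm_star]
  calc ‖Vop a u x - (2 * s₀) • Tvec a u x‖ * ‖v x‖
      ≤ (2 * M + 2 * |s₀| * B) * (∑ j, ‖pdQ j u x‖) * ‖v x‖ := by gcongr
    _ = _ := by rw [Finset.mul_sum, Finset.sum_mul]; simp only [mul_assoc]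

lemma norm_smul_integral_star_mul_le (σ : ℝ) (hu : MemLp u 2 (volume.restrict Ω))
    (hv : MemLp v 2 (volume.restrict Ω)) :
    ‖σ • ∫ x in Ω, star (u x) * v x‖ ≤ |σ| * (nH1 Ω u * nH1 Ω v) := by
  rw [norm_smul, Real.norm_eq_abs]
  gcongr
  calc ‖∫ x in Ω, star (u x) * v x‖ ≤ 1 * (nL2 Ω u * nL2 Ω v) :=
        norm_integral_le_of_norm_le zero_le_one hu hv
          (.of_forall fun x => by rw [norm_mul, Quaternion.norm_star, one_mul])
    _ ≤ nH1 Ω u * nH1 Ω v := by rw [one_mul]; exact nL2_mul_nL2_le nL2_le_nH1 nL2_le_nH1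

end Form

theorem stmt14_general (Ω : Set R3) (hΩo : IsOpen Ω)
    (a : Fin 3 → R3 → ℝ) (ha : ∀ ℓ, ContDiffOn ℝ 1 (a ℓ) Ω)
    (hab : ∀ ℓ : Fin 3, ∃ B : ℝ, ∀ x ∈ Ω, |a ℓ x| ≤ B)
    (hab2 : ∀ i ℓ : Fin 3, ∃ B : ℝ, ∀ x ∈ Ω, |a i x * pdR i (a ℓ) x| ≤ B)
    (s₀ σ : ℝ) :
    ∃ C ≥ (0 : ℝ), ∀ u v : R3 → Quaternion ℝ,
      ContDiffOn ℝ 1 u Ω → ContDiffOn ℝ 1 v Ω →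
      MemLp u 2 (volume.restrict Ω) → MemLp v 2 (volume.restrict Ω) →
      (∀ ℓ : Fin 3, MemLp (pdQ ℓ u) 2 (volume.restrict Ω)) →
      (∀ ℓ : Fin 3, MemLp (pdQ ℓ v) 2 (volume.restrict Ω)) →
      ‖(∑ ℓ : Fin 3, ∫ x in Ω, star (a ℓ x • pdQ ℓ u x) * (a ℓ x • pdQ ℓ v x))
          + (1 / 2 : ℝ) • (∑ ℓ : Fin 3,
              ∫ x in Ω, star (pdQ ℓ u x) * (pdR ℓ (fun y => a ℓ y ^ 2) x • v x))
          + (∫ x in Ω, star (Vop a u x - (2 * s₀) • Tvec a u x) * v x)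
          + σ • ∫ x in Ω, star (u x) * v x‖ ≤
        C * ((∫ x in Ω, ‖u x‖ ^ 2) + nD2 Ω u) ^ ((1 : ℝ) / 2)
          * ((∫ x in Ω, ‖v x‖ ^ 2) + nD2 Ω v) ^ ((1 : ℝ) / 2) := by
  obtain ⟨B, hB0, hB⟩ := exists_abs_le_of_finite hab
  obtain ⟨M, hM0, hM⟩ := exists_abs_le_of_finite (fun p : Fin 3 × Fin 3 => hab2 p.1 p.2)
  have hΩ := hΩo.measurableSet
  have hdiff : ∀ ℓ, ∀ x ∈ Ω, DifferentiableAt ℝ (a ℓ) x := fun ℓ x hx =>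
    ((ha ℓ).differentiableOn one_ne_zero).differentiableAt (hΩo.mem_nhds hx)
  refine ⟨3 * B ^ 2 + 3 * M + 3 * (2 * M + 2 * |s₀| * B) + |σ|, by positivity,
    fun u v _ _ hu hv hdu hdv => ?_⟩
  calc _ ≤ _ := norm_add₄_le
    _ ≤ 3 * B ^ 2 * (nH1 Ω u * nH1 Ω v) + 3 * M * (nH1 Ω u * nH1 Ω v)
        + 3 * (2 * M + 2 * |s₀| * B) * (nH1 Ω u * nH1 Ω v) + |σ| * (nH1 Ω u * nH1 Ω v) := by
      gcongr
      · exact norm_sum_integral_coeff_pdQ_le hΩ hB hdu hdv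
      · exact norm_half_sum_integral_pdR_sq_le hΩ hM0 hdiff (fun ℓ => hM (ℓ, ℓ)) hdu hv
      · exact norm_integral_vect_le hΩ s₀ hB0 hM0 hB (fun i ℓ => hM (i, ℓ)) hdu hv
      · exact norm_smul_integral_star_mul_le σ hu hv
    _ = _ := by unfold nH1; ring

/-- continuity of the bilinear form `b_s`, inequality (bilcont) of
Proposition 4.1 of the paper, for the form without boundary term of Definition 3.3.
If the `aₗ` and all products `aᵢ∂ᵢaₗ` are bounded on `Ω`, then for every `s₀ ∈ ℝ` and
`σ ≥ 0` there is `C ≥ 0` with `|b(u,v)| ≤ C ‖u‖_{H¹} ‖v‖_{H¹}` for all admissible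
`u, v`, where
`b(u,v) = Σₗ ∫ star(aₗ∂ₗu) aₗ∂ₗv + (1/2) Σₗ ∫ star(∂ₗu) ∂ₗ(aₗ²) v
  + ∫ star(Vu − 2s₀Tu) v + σ ∫ star(u) v`. -/
theorem stmt14 (Ω : Set R3) (hΩo : IsOpen Ω)
    (a : Fin 3 → R3 → ℝ) (ha : ∀ ℓ, ContDiffOn ℝ 1 (a ℓ) Ω)
    (hab : ∀ ℓ : Fin 3, ∃ B : ℝ, ∀ x ∈ Ω, |a ℓ x| ≤ B)
    (hab2 : ∀ i ℓ : Fin 3, ∃ B : ℝ, ∀ x ∈ Ω, |a i x * pdR i (a ℓ) x| ≤ B)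
    (s₀ σ : ℝ) (hσ : 0 ≤ σ) :
    ∃ C ≥ (0 : ℝ), ∀ u v : R3 → Quaternion ℝ,
      ContDiffOn ℝ 1 u Ω → ContDiffOn ℝ 1 v Ω →
      MemLp u 2 (volume.restrict Ω) → MemLp v 2 (volume.restrict Ω) →
      (∀ ℓ : Fin 3, MemLp (pdQ ℓ u) 2 (volume.restrict Ω)) →
      (∀ ℓ : Fin 3, MemLp (pdQ ℓ v) 2 (volume.restrict Ω)) →
      ‖(∑ ℓ : Fin 3, ∫ x in Ω, star (a ℓ x • pdQ ℓ u x) * (a ℓ x • pdQ ℓ v x))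
          + (1 / 2 : ℝ) • (∑ ℓ : Fin 3,
              ∫ x in Ω, star (pdQ ℓ u x) * (pdR ℓ (fun y => a ℓ y ^ 2) x • v x))
          + (∫ x in Ω, star (Vop a u x - (2 * s₀) • Tvec a u x) * v x)
          + σ • ∫ x in Ω, star (u x) * v x‖ ≤
        C * ((∫ x in Ω, ‖u x‖ ^ 2) + nD2 Ω u) ^ ((1 : ℝ) / 2)
          * ((∫ x in Ω, ‖v x‖ ^ 2) + nD2 Ω v) ^ ((1 : ℝ) / 2) :=
  stmt14_general Ω hΩo a ha hab hab2 s₀ σ
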